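/- For every nonnegative integer n and all x > 0, the n-fold application of the operator x^{1-λ} · d/dx to the function e^x equals ∑_{k=0}^{∞} (k)_{n,λ} x^{k - nλ} / k!, which in turn equals x^{-nλ} · Bel_{n,λ}(x) · e^x. -/

import Mathlib

/-!
Write `S_n(x) = ∑ₖ (k)_{n,λ} xᵏ / k!`, i.e. `egfSum (fun k => degFall λ k n) x`, which
converges everywhere with termwise derivative since `|(k)_{n,λ}| ≤ C rᵏ`. As
`(k)_{n+1,λ} = (k - nλ) (k)_{n,λ}`, termwise differentiation gives `S_{n+1} = x S_n' - nλ S_n`,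
which is exactly the identity `x^{1-λ} (x^{-nλ} S_n)' = x^{-(n+1)λ} S_{n+1}` on `x > 0`.
Induction from `S_0 = exp` shows that the `n`-th iterate of the operator on `exp` is
`x^{-nλ} S_n(x)`, and both claimed expressions are rewritings of this.
-/

open Finset

/-- Degenerate falling factorial `(x)_{n,λ}`. -/
noncomputable def degFall (lam x : ℝ) (n : ℕ) : ℝ := ∏ i ∈ Finset.range n, (x - i * lam)

/-- Degenerate Bell polynomial `Bel_{n,λ}(x) = e^{-x} ∑_{k≥0} (k)_{n,λ} x^k / k!`. -/
noncomputable def Bel (lam x : ℝ) (n : ℕ) : ℝ :=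
  Real.exp (-x) * ∑' k : ℕ, degFall lam (k : ℝ) n * x ^ k / (Nat.factorial k)

/-- The operator `f ↦ (x ↦ x^{1-λ} f'(x))`. -/
noncomputable def Lop (lam : ℝ) (f : ℝ → ℝ) : ℝ → ℝ := fun x => x ^ ((1 : ℝ) - lam) * deriv f x

open Nat Real Set

noncomputable def egfSum (a : ℕ → ℝ) (x : ℝ) : ℝ := ∑' k, a k * x ^ k / k !

section egfSum

variable {a : ℕ → ℝ} {C r : ℝ}

theorem summable_mul_pow_div_factorial (ha : ∀ k, |a k| ≤ C * r ^ k) (x : ℝ) :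
    Summable fun k => a k * x ^ k / k ! := by
  refine .of_norm_bounded ((Real.summable_pow_div_factorial (r * |x|)).mul_left C) fun k => ?_
  rw [Real.norm_eq_abs, abs_div, abs_mul, abs_pow, Nat.abs_cast, mul_pow, ← mul_div_assoc,
    ← mul_assoc]
  gcongr
  exact ha k

theorem hasDerivAt_egfSum (ha : ∀ k, |a k| ≤ C * r ^ k) (x : ℝ) :
    HasDerivAt (egfSum a) (∑' k, a k * (k * x ^ (k - 1)) / k !) x := by
  obtain ⟨R, hR, hxR⟩ : ∃ R : ℝ, 1 ≤ R ∧ |x| < R := ⟨|x| + 1, by simp, by simp⟩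
  have hterm (k : ℕ) (y : ℝ) :
      HasDerivAt (fun z => a k * z ^ k / k !) (a k * (k * y ^ (k - 1)) / k !) y :=
    ((hasDerivAt_pow k y).const_mul (a k)).div_const _
  have hbound (k : ℕ) (y : ℝ) (hy : y ∈ Metric.ball 0 R) :
      ‖a k * (k * y ^ (k - 1)) / (k ! : ℝ)‖ ≤ C * ((r * exp 1 * R) ^ k / k !) := by
    have hy : |y| ≤ R := by simpa using (mem_ball_zero_iff.mp hy).le
    have hk : (k : ℝ) ≤ exp 1 ^ k := by
      rw [← exp_nat_mul, mul_one]; linarith [add_one_le_exp k]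
    have hCr : 0 ≤ C * r ^ k := (abs_nonneg _).trans (ha k)
    calc ‖a k * (k * y ^ (k - 1)) / (k ! : ℝ)‖ = |a k| * k * |y| ^ (k - 1) / k ! := by
          rw [Real.norm_eq_abs, abs_div, abs_mul, abs_mul, abs_pow, Nat.abs_cast, Nat.abs_cast,
            mul_assoc]
      _ ≤ (C * r ^ k) * exp 1 ^ k * R ^ k / k ! := by
          gcongr
          · exact ha k
          · exact (pow_le_pow_left₀ (abs_nonneg y) hy _).trans
              (pow_le_pow_right₀ hR (Nat.sub_le k 1))
      _ = C * ((r * exp 1 * R) ^ k / k !) := by ring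
  have hx : x ∈ Metric.ball (0 : ℝ) R := by simpa using hxR
  exact hasDerivAt_tsum_of_isPreconnected ((Real.summable_pow_div_factorial _).mul_left C)
    Metric.isOpen_ball (convex_ball 0 R).isPreconnected (fun k y _ => hterm k y) hbound hx
    (summable_mul_pow_div_factorial ha x) hx

end egfSum

theorem degFall_succ (lam x : ℝ) (n : ℕ) :
    degFall lam x (n + 1) = degFall lam x n * (x - n * lam) := by
  simp [degFall, prod_range_succ]

theorem abs_degFall_le (lam : ℝ) (n k : ℕ) :
    |degFall lam k n| ≤ (1 + n * |lam|) ^ n * exp n ^ k := by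
  have hfactor (i : ℕ) (hi : i ∈ range n) :
      |(k : ℝ) - i * lam| ≤ (1 + n * |lam|) * exp k := by
    have hi : (i : ℝ) ≤ n := by exact_mod_cast (mem_range.mp hi).le
    have hk : (k : ℝ) + 1 ≤ exp k := add_one_le_exp k
    calc |(k : ℝ) - i * lam| ≤ k + n * |lam| := by
          refine (abs_sub _ _).trans ?_
          rw [Nat.abs_cast, abs_mul, Nat.abs_cast]
          gcongr
      _ ≤ exp k + n * |lam| * exp k := by
          gcongr ?_ + ?_
          · linarith
          · exact le_mul_of_one_le_right (by positivity) (one_le_exp k.cast_nonneg)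
      _ = (1 + n * |lam|) * exp k := by ring
  calc |degFall lam k n| ≤ ((1 + n * |lam|) * exp k) ^ n := by
        rw [degFall, abs_prod]
        exact (prod_le_prod (fun _ _ => abs_nonneg _) hfactor).trans_eq (by simp)
    _ = (1 + n * |lam|) ^ n * exp n ^ k := by
        rw [mul_pow, ← exp_nat_mul, ← exp_nat_mul, mul_comm (k : ℝ)]

theorem summable_degFall_mul_pow_div_factorial (lam : ℝ) (n : ℕ) (x : ℝ) :
    Summable fun k : ℕ => degFall lam k n * x ^ k / k ! :=
  summable_mul_pow_div_factorial (abs_degFall_le lam n) x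

theorem egfSum_degFall_succ (lam : ℝ) (n : ℕ) (x : ℝ) :
    egfSum (fun k => degFall lam k (n + 1)) x =
      x * (∑' k : ℕ, degFall lam k n * (k * x ^ (k - 1)) / k !)
        - n * lam * egfSum (fun k => degFall lam k n) x := by
  rw [egfSum, egfSum, eq_sub_iff_add_eq, ← tsum_mul_left, ← tsum_mul_left,
    ← (summable_degFall_mul_pow_div_factorial lam (n + 1) x).tsum_add
      ((summable_degFall_mul_pow_div_factorial lam n x).mul_left _)]
  refine tsum_congr fun k => ?_
  rw [degFall_succ]
  rcases k with _ | k
  · simp [mul_comm]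
  · rw [pow_succ, Nat.add_sub_cancel]
    ring

theorem hasDerivAt_rpow_mul_egfSum_degFall (lam : ℝ) (n : ℕ) {x : ℝ} (hx : 0 < x) :
    HasDerivAt (fun y => y ^ (-(n * lam)) * egfSum (fun k => degFall lam k n) y)
      (x ^ (lam - 1) * (x ^ (-((n + 1 : ℕ) * lam)) * egfSum (fun k => degFall lam k (n + 1)) x))
      x := by
  refine ((hasDerivAt_rpow_const (p := -(n * lam)) (.inl hx.ne')).mul
    (hasDerivAt_egfSum (abs_degFall_le lam n) x)).congr_deriv ?_
  have hpow : x ^ (lam - 1) * x ^ (-((n + 1 : ℕ) * lam)) = x ^ (-(n * lam) - 1) := by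
    rw [← rpow_add hx]; push_cast; ring_nf
  have hpow' : x ^ (-(n * lam) - 1) * x = x ^ (-(n * lam)) := by
    rw [rpow_sub_one hx.ne', div_mul_cancel₀ _ hx.ne']
  rw [← mul_assoc, hpow, egfSum_degFall_succ, mul_sub, ← mul_assoc, hpow']
  ring

theorem iterate_Lop_exp_eqOn (lam : ℝ) (n : ℕ) :
    EqOn ((Lop lam)^[n] exp) (fun y => y ^ (-(n * lam)) * egfSum (fun k => degFall lam k n) y)
      (Ioi 0) := by
  induction n with
  | zero =>
    intro x _
    simp [degFall, egfSum, Real.exp_eq_exp_ℝ, NormedSpace.exp_eq_tsum_div]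
  | succ n ih =>
    intro x hx
    have hderiv := (hasDerivAt_rpow_mul_egfSum_degFall lam n hx).congr_of_eventuallyEq
      (Filter.eventuallyEq_of_mem (Ioi_mem_nhds hx) ih)
    rw [Function.iterate_succ_apply', Lop, hderiv.deriv, ← mul_assoc, ← rpow_add hx]
    simp

/-- `(x^{1-λ} d/dx)^n e^x = ∑_{k≥0} (k)_{n,λ} x^{k-nλ}/k! = x^{-nλ} Bel_{n,λ}(x) e^x`
for `x > 0`. -/
theorem lop_iterate_exp (lam : ℝ) (n : ℕ) (x : ℝ) (hx : 0 < x) :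
    (Lop lam)^[n] Real.exp x =
        ∑' k : ℕ, degFall lam (k : ℝ) n * x ^ ((k : ℝ) - n * lam) / (Nat.factorial k) ∧
      (∑' k : ℕ, degFall lam (k : ℝ) n * x ^ ((k : ℝ) - n * lam) / (Nat.factorial k)) =
        x ^ (-(n * lam)) * Bel lam x n * Real.exp x := by
  have hsum : ∑' k : ℕ, degFall lam (k : ℝ) n * x ^ ((k : ℝ) - n * lam) / (Nat.factorial k) =
      x ^ (-(n * lam)) * egfSum (fun k => degFall lam k n) x := by
    rw [egfSum, ← tsum_mul_left]
    refine tsum_congr fun k => ?_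
    rw [sub_eq_neg_add, rpow_add hx, rpow_natCast]
    ring
  refine ⟨(iterate_Lop_exp_eqOn lam n hx).trans hsum.symm, ?_⟩
  rw [hsum, Bel, exp_neg, mul_assoc, mul_right_comm, inv_mul_cancel₀ (exp_ne_zero x), one_mul]
  rfl
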